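/- Let p ∈ (1,∞). If 0 < a₁ < a₂, then G_{a₂}(y) < G_{a₁}(y) for every y ∈ (0,1). -/

import Mathlib

open Set Real Filter MeasureTheory

/-- `F_a(y,w)` from the paper (with parameter `p`). -/
noncomputable def Fa (p a y w : ℝ) : ℝ :=
  (8*p*(1/a + 2*y) + (2*p/a + 4*(3*p - 2)*y + 2*(p - 1)*y*w)*w) / (y^2 * (4 + (p - 1)*w))

/-- `G` is the family `a ↦ G_a` of solutions of `G_a' = -F_a(y, G_a)` on `(0,1)`
with `G_a(1) = 0`: each `G_a` is continuous on `(0,1]`, positive on `(0,1)` and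
strictly decreasing on `(0,1]`. -/
def IsGFamily (p : ℝ) (G : ℝ → ℝ → ℝ) : Prop :=
  ∀ a : ℝ, 0 < a →
    ContinuousOn (G a) (Set.Ioc 0 1) ∧
    G a 1 = 0 ∧
    (∀ y ∈ Set.Ioo (0:ℝ) 1, HasDerivAt (G a) (-(Fa p a y (G a y))) y) ∧
    (∀ y ∈ Set.Ioo (0:ℝ) 1, 0 < G a y) ∧
    StrictAntiOn (G a) (Set.Ioc 0 1)

open Topology

/-! The difference `h = G_{a₁} - G_{a₂}` vanishes at `1`, and wherever it vanishes its derivative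
`F_{a₂}(y, w) - F_{a₁}(y, w)` is negative, because `F_a(y, w)` is strictly decreasing in `a`.
Continuity of the right-hand side up to `y = 1` makes `h` positive just left of `1`, and a
function that is positive at the right end of an interval and can only cross zero downwards
stays positive on the whole interval. -/

lemma pos_of_hasDerivWithinAt_neg_of_eq_zero {h : ℝ → ℝ} {a b : ℝ}
    (hcont : ContinuousOn h (Icc a b)) (hb : 0 < h b)
    (hzero : ∀ x ∈ Ico a b, h x = 0 → ∃ d < 0, HasDerivWithinAt h d (Ici x) x) :
    ∀ x ∈ Icc a b, 0 < h x := by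
  by_contra! hbad
  obtain ⟨x₀, hx₀, hx₀_nonpos⟩ := hbad
  set S := Icc a b ∩ h ⁻¹' Iic 0
  have hS_closed : IsClosed S := hcont.preimage_isClosed_of_isClosed isClosed_Icc isClosed_Iic
  have hS_bdd : BddAbove S := bddAbove_Icc.mono inter_subset_left
  set c := sSup S
  obtain ⟨⟨hac, hcb⟩, hc_nonpos⟩ : c ∈ S := hS_closed.csSup_mem ⟨x₀, hx₀, hx₀_nonpos⟩ hS_bdd
  have hc_nonpos : h c ≤ 0 := hc_nonpos
  have hpos_right : ∀ x ∈ Ioc c b, 0 < h x := fun x hx => by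
    by_contra! hx_nonpos
    exact (le_csSup hS_bdd ⟨⟨hac.trans hx.1.le, hx.2⟩, hx_nonpos⟩).not_gt hx.1
  have hcb : c < b := hcb.lt_of_ne fun hcb_eq => by
    rw [hcb_eq] at hc_nonpos; exact hc_nonpos.not_gt hb
  have hc_zero : h c = 0 := by
    obtain ⟨z, hz, hz_zero⟩ := intermediate_value_Icc hcb.le
      (hcont.mono (Icc_subset_Icc_left hac)) ⟨hc_nonpos, hb.le⟩
    rcases hz.1.eq_or_lt with rfl | hcz
    · exact hz_zero
    · exact absurd hz_zero (hpos_right z ⟨hcz, hz.2⟩).ne'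
  obtain ⟨d, hd, hderiv⟩ := hzero c ⟨hac, hcb⟩ hc_zero
  obtain ⟨z, hz_slope, hz⟩ :=
    ((hderiv.Ioi_of_Ici.limsup_slope_le' (lt_irrefl c) hd).and (Ioo_mem_nhdsGT hcb)).exists
  rw [slope_def_field, hc_zero, sub_zero] at hz_slope
  exact (div_pos (hpos_right z ⟨hz.1, hz.2.le⟩) (sub_pos.2 hz.1)).not_gt hz_slope

lemma eventually_lt_of_hasDerivAt_of_continuousWithinAt_neg {h h' : ℝ → ℝ} {a b : ℝ}
    (hab : a < b) (hcont : ContinuousOn h (Ioc a b))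
    (hderiv : ∀ x ∈ Ioo a b, HasDerivAt h (h' x) x)
    (h'cont : ContinuousWithinAt h' (Ioo a b) b) (hneg : h' b < 0) :
    ∀ᶠ x in 𝓝[<] b, h b < h x := by
  have hev : ∀ᶠ x in 𝓝[<] b, h' x < 0 ∧ x ∈ Ioo a b := by
    rw [← nhdsWithin_Ioo_eq_nhdsLT hab]
    exact (h'cont.eventually_lt_const hneg).and self_mem_nhdsWithin
  obtain ⟨c, hcb, hc⟩ := (mem_nhdsLT_iff_exists_Ioo_subset' hab).1 hev
  filter_upwards [Ioo_mem_nhdsLT hcb] with x hx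
  have hinterior : interior (Icc x b) ⊆ Ioo c b := by
    rw [interior_Icc]; exact Ioo_subset_Ioo_left hx.1.le
  have hanti : StrictAntiOn h (Icc x b) :=
    strictAntiOn_of_hasDerivWithinAt_neg (convex_Icc x b)
      (hcont.mono fun z hz => ⟨(hc hx).2.1.trans_le hz.1, hz.2⟩)
      (fun z hz => (hderiv z (hc (hinterior hz)).2).hasDerivWithinAt)
      (fun z hz => (hc (hinterior hz)).1)
  exact hanti (left_mem_Icc.2 hx.2.le) (right_mem_Icc.2 hx.2.le) hx.2

lemma pos_of_eq_zero_of_hasDerivAt_neg_of_eq_zero {h h' : ℝ → ℝ} {a b : ℝ} (hab : a < b)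
    (hcont : ContinuousOn h (Ioc a b)) (hb : h b = 0)
    (hderiv : ∀ x ∈ Ioo a b, HasDerivAt h (h' x) x)
    (h'cont : ContinuousWithinAt h' (Ioc a b) b) (hzero : ∀ x ∈ Ioc a b, h x = 0 → h' x < 0) :
    ∀ x ∈ Ioo a b, 0 < h x := by
  intro x hx
  have hnear : ∀ᶠ y in 𝓝[<] b, 0 < h y := by
    simpa only [hb] using eventually_lt_of_hasDerivAt_of_continuousWithinAt_neg hab hcont
      hderiv (h'cont.mono Ioo_subset_Ioc_self) (hzero b (right_mem_Ioc.2 hab) hb)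
  obtain ⟨c, hc_pos, hxc, hcb⟩ := (hnear.and (Ioo_mem_nhdsLT hx.2)).exists
  have hsub : Icc x c ⊆ Ioo a b := fun y hy => ⟨hx.1.trans_le hy.1, hy.2.trans_lt hcb⟩
  refine pos_of_hasDerivWithinAt_neg_of_eq_zero (hcont.mono (hsub.trans Ioo_subset_Ioc_self))
    hc_pos (fun y hy hy_zero => ?_) x (left_mem_Icc.2 hxc.le)
  have hy' : y ∈ Ioo a b := hsub (Ico_subset_Icc_self hy)
  exact ⟨h' y, hzero y (Ioo_subset_Ioc_self hy') hy_zero, (hderiv y hy').hasDerivWithinAt⟩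

lemma Fa_lt_Fa_of_lt {p a₁ a₂ y w : ℝ} (hp : 1 ≤ p) (ha₁ : 0 < a₁) (ha : a₁ < a₂)
    (hy : 0 < y) (hw : 0 ≤ w) : Fa p a₂ y w < Fa p a₁ y w := by
  have hden : 0 < y^2 * (4 + (p - 1)*w) := by
    have : 0 ≤ (p - 1) * w := mul_nonneg (by linarith) hw
    positivity
  have hinv : 1/a₂ < 1/a₁ := one_div_lt_one_div_of_lt ha₁ ha
  unfold Fa
  rw [div_lt_div_iff_of_pos_right hden]
  have hcoef : 0 < 8*p + 2*p*w := by positivity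
  linear_combination mul_lt_mul_of_pos_left hinv hcoef

lemma ContinuousOn.Fa {p a : ℝ} {s : Set ℝ} {f : ℝ → ℝ} (hp : 1 ≤ p) (hs : s ⊆ Ioi 0)
    (hf : ContinuousOn f s) (hf_nonneg : ∀ y ∈ s, 0 ≤ f y) :
    ContinuousOn (fun y => Fa p a y (f y)) s := by
  refine ContinuousOn.div (by fun_prop) (by fun_prop) fun y hy => ?_
  have : 0 ≤ (p - 1) * f y := mul_nonneg (by linarith) (hf_nonneg y hy)
  have : 0 < y := hs hy
  positivity

lemma IsGFamily.nonneg {p : ℝ} {G : ℝ → ℝ → ℝ} (hG : IsGFamily p G) {a : ℝ} (ha : 0 < a) :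
    ∀ y ∈ Ioc (0:ℝ) 1, 0 ≤ G a y := by
  obtain ⟨-, hG1, -, hpos, -⟩ := hG a ha
  rintro y ⟨hy0, hy1⟩
  rcases hy1.eq_or_lt with rfl | hy1
  · exact hG1.ge
  · exact (hpos y ⟨hy0, hy1⟩).le

theorem G_antitone_in_a (p : ℝ) (hp : 1 < p) (G : ℝ → ℝ → ℝ)
    (hG : IsGFamily p G) (a₁ a₂ : ℝ) (ha₁ : 0 < a₁) (ha : a₁ < a₂) :
    ∀ y ∈ Set.Ioo (0:ℝ) 1, G a₂ y < G a₁ y := by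
  have ha₂ : 0 < a₂ := ha₁.trans ha
  obtain ⟨hc₁, hG₁_one, hd₁, -, -⟩ := hG a₁ ha₁
  obtain ⟨hc₂, hG₂_one, hd₂, -, -⟩ := hG a₂ ha₂
  set h' := fun y => Fa p a₂ y (G a₂ y) - Fa p a₁ y (G a₁ y)
  have hderiv : ∀ y ∈ Ioo (0:ℝ) 1, HasDerivAt (fun y => G a₁ y - G a₂ y) (h' y) y :=
    fun y hy => ((hd₁ y hy).sub (hd₂ y hy)).congr_deriv (by ring)
  have h'cont : ContinuousOn h' (Ioc 0 1) :=
    (hc₂.Fa hp.le (fun _ hy => hy.1) (hG.nonneg ha₂)).sub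
      (hc₁.Fa hp.le (fun _ hy => hy.1) (hG.nonneg ha₁))
  have hzero : ∀ y ∈ Ioc (0:ℝ) 1, G a₁ y - G a₂ y = 0 → h' y < 0 := fun y hy hy_zero => by
    simp only [h', sub_eq_zero.1 hy_zero, sub_neg]
    exact Fa_lt_Fa_of_lt hp.le ha₁ ha hy.1 (hG.nonneg ha₂ y hy)
  intro y hy
  exact sub_pos.1 <| pos_of_eq_zero_of_hasDerivAt_neg_of_eq_zero one_pos (hc₁.sub hc₂)
    (by simp [hG₁_one, hG₂_one]) hderiv (h'cont 1 (right_mem_Ioc.2 one_pos)) hzero y hy
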